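/- Let 1 → G → H →π J → 1 be an extension of finite groups with set-theoretic section s : J → H, s(1) = 1. Then the linear map Ψ : D^J(G) ⊗ K[J] → D(H), (δ_h ⊗ g ⊗ j) ↦ δ_h ⊗ g s(j), is an algebra isomorphism from the orbifold algebra of D^J(G) (with weak J-action φ_j(δ_h ⊗ g) = δ_{s(j)h s(j)⁻¹} ⊗ s(j)g s(j)⁻¹ and coherence elements c_{i,j} = ∑_{h∈H} δ_h ⊗ s(i)s(j)s(ij)⁻¹) to the Drinfel'd double D(H). -/

import Mathlib

open Finset

variable {K H J : Type*} [Field K] [Group H] [Group J]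

/-- Product of the Drinfel'd double `D(H)` (functions `H × H → K`, `x (h, h')` being
the coefficient of `δ_h ⊗ h'`). -/
def doubleMul [Fintype H] (x y : H × H → K) : H × H → K :=
  fun p => ∑ h : H, x (p.1, h) * y (h⁻¹ * p.1 * h, h⁻¹ * p.2)

/-- The unit `∑_h δ_h ⊗ 1` of `D(H)`. -/
def doubleOne [DecidableEq H] : H × H → K :=
  fun p => if p.2 = 1 then 1 else 0

/-- The Hopf subalgebra `D^J(G) ⊆ D(H)` (with `G = ker π`), modelled as functions
`H × ker π → K`; its product inherited from `D(H)`. -/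
def djMul (π : H →* J) [Fintype π.ker] (x y : H × π.ker → K) : H × π.ker → K :=
  fun p => ∑ g : π.ker, x (p.1, g) * y ((g : H)⁻¹ * p.1 * g, g⁻¹ * p.2)

/-- The weak `J`-action `φ_j(δ_h ⊗ g) = δ_{s(j) h s(j)⁻¹} ⊗ s(j) g s(j)⁻¹` on
`D^J(G)`. -/
def djPhi (π : H →* J) (s : J → H) (hs : ∀ j, π (s j) = j) (j : J)
    (x : H × π.ker → K) : H × π.ker → K :=
  fun p => x ((s j)⁻¹ * p.1 * s j,
    ⟨(s j)⁻¹ * (p.2 : H) * s j, by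
      have h2 : π (p.2 : H) = 1 := p.2.2
      simp [MonoidHom.mem_ker, h2, hs]⟩)

/-- The coherence elements `c_{i,j} = ∑_{h ∈ H} δ_h ⊗ s(i)s(j)s(ij)⁻¹` of the weak
`J`-action on `D^J(G)`. -/
def djC [DecidableEq H] (π : H →* J) (s : J → H) (i j : J) : H × π.ker → K :=
  fun p => if (p.2 : H) = s i * s j * (s (i * j))⁻¹ then 1 else 0

/-- The multiplication of the orbifold algebra of `D^J(G)` (modelled as functions
`(H × ker π) × J → K`): `(a ⊗ i)(b ⊗ j) = a φ_i(b) c_{i,j} ⊗ ij`. -/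
def djOrbMul (π : H →* J) [Fintype J] [Fintype π.ker] [DecidableEq H]
    (s : J → H) (hs : ∀ j, π (s j) = j)
    (X Y : (H × π.ker) × J → K) : (H × π.ker) × J → K :=
  fun q => ∑ i : J,
    djMul π (djMul π (fun p => X (p, i))
        (djPhi π s hs i (fun p => Y (p, i⁻¹ * q.2))))
      (djC π s i (i⁻¹ * q.2)) q.1

/-- The unit `1_{D^J(G)} ⊗ 1_J` of the orbifold algebra. -/
def djOrbOne [DecidableEq H] [DecidableEq J] (π : H →* J) :
    (H × π.ker) × J → K :=
  fun q => if (q.1.2 : H) = 1 ∧ q.2 = 1 then 1 else 0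

/-- The linear map `Ψ : D^J(G) ⊗ K[J] → D(H)`, `δ_h ⊗ g ⊗ j ↦ δ_h ⊗ g s(j)`. -/
def djPsi (π : H →* J) (s : J → H) (hs : ∀ j, π (s j) = j)
    (X : (H × π.ker) × J → K) : H × H → K :=
  fun p => X ((p.1, ⟨p.2 * (s (π p.2))⁻¹, by
    simp [MonoidHom.mem_ker, hs]⟩), π p.2)

/-!
The section identifies `H` with `J × ker π` via `(j, g) ↦ g s(j)`, and `Ψ` is precomposition
with this identification, hence bijective. Splitting the sum over `H` in the product of `D(H)`
accordingly, the summand of `h = g s(i)` matches the `i`-th summand of the orbifold product: the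
conjugation `φ_i` accounts for moving `s(i)` past the second factor, and multiplying by the
coherence element `c_{i, i⁻¹ j}` corrects `s(i) s(i⁻¹ j)` to `s(j)`.
-/

section Extension

variable (π : H →* J) (s : J → H)

lemma map_mul_section (hs : ∀ j, π (s j) = j) (g : π.ker) (j : J) : π (g * s j) = j := by
  rw [map_mul, g.2, hs, one_mul]

lemma mul_section_eq_one_iff (hs : ∀ j, π (s j) = j) (hs1 : s 1 = 1) (g : π.ker) (j : J) :
    (g : H) * s j = 1 ↔ (g : H) = 1 ∧ j = 1 := by
  constructor
  · intro h
    have hj : j = 1 := by rw [← map_mul_section π s hs g j, h, map_one]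
    subst hj
    simpa [hs1] using h
  · rintro ⟨hg, rfl⟩
    simp [hg, hs1]

def kerSectionEquiv (hs : ∀ j, π (s j) = j) : J × π.ker ≃ H where
  toFun q := q.2 * s q.1
  invFun h := (π h, ⟨h * (s (π h))⁻¹, by simp [MonoidHom.mem_ker, hs]⟩)
  left_inv q := by
    have hq := map_mul_section π s hs q.2 q.1
    ext
    · exact hq
    · simp [hq]
  right_inv h := by simp

def sectionCocycle (hs : ∀ j, π (s j) = j) (i j : J) : π.ker :=
  ⟨s i * s j * (s (i * j))⁻¹, by simp [MonoidHom.mem_ker, hs]⟩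

lemma djPsi_apply_mul_section (hs : ∀ j, π (s j) = j) {R : Type*}
    (X : (H × π.ker) × J → R) (h : H) (g : π.ker) (j : J) :
    djPsi π s hs X (h, g * s j) = X ((h, g), j) :=
  congrArg (fun q : J × π.ker => X ((h, q.2), q.1)) ((kerSectionEquiv π s hs).left_inv (j, g))

theorem djPsi_bijective (hs : ∀ j, π (s j) = j) {R : Type*} :
    Function.Bijective (djPsi (K := R) π s hs) := by
  let e : (H × π.ker) × J ≃ H × H := (Equiv.prodAssoc _ _ _).trans
    (Equiv.prodCongr (Equiv.refl H) ((Equiv.prodComm _ _).trans (kerSectionEquiv π s hs)))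
  have he : djPsi (K := R) π s hs = Equiv.arrowCongr e (Equiv.refl R) := rfl
  exact he ▸ Equiv.bijective _

lemma djMul_djC_apply [Fintype π.ker] [DecidableEq H] (hs : ∀ j, π (s j) = j)
    (x : H × π.ker → K) (i j : J) (p : H × π.ker) :
    djMul π x (djC π s i j) p = x (p.1, p.2 * (sectionCocycle π s hs i j)⁻¹) := by
  rw [djMul, Finset.sum_eq_single_of_mem (p.2 * (sectionCocycle π s hs i j)⁻¹) (mem_univ _)]
  · simp [djC, sectionCocycle]
  · intro g _ hg
    rw [djC, if_neg, mul_zero]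
    intro hc
    apply hg
    ext
    simp [sectionCocycle, ← hc]

lemma doubleMul_eq_sum_section [Fintype H] [Fintype J] [Fintype π.ker]
    (hs : ∀ j, π (s j) = j) (x y : H × H → K) (p : H × H) :
    doubleMul x y p = ∑ i : J, ∑ g : π.ker,
      x (p.1, g * s i) * y ((g * s i)⁻¹ * p.1 * (g * s i), (g * s i)⁻¹ * p.2) := by
  rw [← Fintype.sum_prod_type']
  exact (Equiv.sum_comp (kerSectionEquiv π s hs)
    (fun h => x (p.1, h) * y (h⁻¹ * p.1 * h, h⁻¹ * p.2))).symm

lemma djPhi_apply_eq_djPsi (hs : ∀ j, π (s j) = j) {R : Type*}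
    (Y : (H × π.ker) × J → R) (h : H) (g k : π.ker) (i j : J) :
    djPhi π s hs i (fun p => Y (p, i⁻¹ * j))
        ((g : H)⁻¹ * h * g, g⁻¹ * (k * (sectionCocycle π s hs i (i⁻¹ * j))⁻¹))
      = djPsi π s hs Y ((g * s i)⁻¹ * h * (g * s i), (g * s i)⁻¹ * (k * s j)) := by
  have hij : π ((g * s i)⁻¹ * (k * s j)) = i⁻¹ * j := by
    rw [map_mul, map_inv, map_mul_section π s hs, map_mul_section π s hs]
  refine congrArg Y (Prod.ext (Prod.ext ?_ (Subtype.ext ?_)) hij.symm)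
  · group
  · simp only [hij, sectionCocycle, InvMemClass.coe_inv, MulMemClass.coe_mul,
      mul_inv_cancel_left]
    group

theorem djPsi_djOrbMul [Fintype H] [Fintype J] [Fintype π.ker] [DecidableEq H]
    (hs : ∀ j, π (s j) = j) (X Y : (H × π.ker) × J → K) :
    djPsi π s hs (djOrbMul π s hs X Y) = doubleMul (djPsi π s hs X) (djPsi π s hs Y) := by
  funext ⟨h, x⟩
  obtain ⟨⟨j, k⟩, rfl⟩ := (kerSectionEquiv π s hs).surjective x
  rw [doubleMul_eq_sum_section π s hs]
  simp only [kerSectionEquiv, Equiv.coe_fn_mk, djPsi_apply_mul_section, djOrbMul,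
    djMul_djC_apply π s hs]
  refine sum_congr rfl fun i _ => sum_congr rfl fun g _ => ?_
  rw [← djPhi_apply_eq_djPsi]

theorem djPsi_djOrbOne [DecidableEq H] [DecidableEq J] (hs : ∀ j, π (s j) = j)
    (hs1 : s 1 = 1) :
    djPsi π s hs (djOrbOne (K := K) π) = doubleOne := by
  funext ⟨h, x⟩
  obtain ⟨⟨j, k⟩, rfl⟩ := (kerSectionEquiv π s hs).surjective x
  simp only [kerSectionEquiv, Equiv.coe_fn_mk, djPsi_apply_mul_section, djOrbOne, doubleOne,
    mul_section_eq_one_iff π s hs hs1]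

end Extension

theorem djPsi_algebra_iso_general [Fintype H] [Fintype J] [DecidableEq H] [DecidableEq J]
    (π : H →* J)
    (s : J → H) (hs : ∀ j, π (s j) = j) (hs1 : s 1 = 1) :
    -- Ψ is linear
    (∀ X Y : (H × π.ker) × J → K,
      djPsi π s hs (X + Y) = djPsi π s hs X + djPsi π s hs Y) ∧
    (∀ (k : K) (X : (H × π.ker) × J → K),
      djPsi π s hs (k • X) = k • djPsi π s hs X) ∧
    -- Ψ is bijective
    Function.Bijective (djPsi (K := K) π s hs) ∧
    -- Ψ is multiplicative and unital
    (∀ X Y : (H × π.ker) × J → K,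
      djPsi π s hs (djOrbMul π s hs X Y)
        = doubleMul (djPsi π s hs X) (djPsi π s hs Y)) ∧
    djPsi π s hs (djOrbOne (K := K) π) = doubleOne :=
  ⟨fun _ _ => rfl, fun _ _ => rfl, djPsi_bijective π s hs, djPsi_djOrbMul π s hs,
    djPsi_djOrbOne π s hs hs1⟩

/-- Let `1 → G → H → J → 1` be an extension of finite groups with set-theoretic
section `s` of `π`, `s 1 = 1`. The map `Ψ : D^J(G) ⊗ K[J] → D(H)`,
`δ_h ⊗ g ⊗ j ↦ δ_h ⊗ g s(j)`, is an isomorphism of algebras from the orbifold algebra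
of `D^J(G)` (with the weak `J`-action `φ_j = conjugation by s(j)` and coherence
elements `c_{i,j} = ∑_h δ_h ⊗ s(i)s(j)s(ij)⁻¹`) onto the Drinfel'd double `D(H)`. -/
theorem djPsi_algebra_iso [Fintype H] [Fintype J] [DecidableEq H] [DecidableEq J]
    (π : H →* J) (hπ : Function.Surjective π)
    (s : J → H) (hs : ∀ j, π (s j) = j) (hs1 : s 1 = 1) :
    -- Ψ is linear
    (∀ X Y : (H × π.ker) × J → K,
      djPsi π s hs (X + Y) = djPsi π s hs X + djPsi π s hs Y) ∧
    (∀ (k : K) (X : (H × π.ker) × J → K),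
      djPsi π s hs (k • X) = k • djPsi π s hs X) ∧
    -- Ψ is bijective
    Function.Bijective (djPsi (K := K) π s hs) ∧
    -- Ψ is multiplicative and unital
    (∀ X Y : (H × π.ker) × J → K,
      djPsi π s hs (djOrbMul π s hs X Y)
        = doubleMul (djPsi π s hs X) (djPsi π s hs Y)) ∧
    djPsi π s hs (djOrbOne (K := K) π) = doubleOne :=
  djPsi_algebra_iso_general π s hs hs1
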